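/- For n ∈ {4, 5, 12, 13}, the murtage number of the underlying graph of the finite Jaco graph J_n(1) equals 1. -/

import Mathlib

open SimpleGraph

/-- In-degree of vertex `j` in the infinite Jaco graph `J_∞(1)`:
the number of `i < j` with an arc `(v_i, v_j)`, i.e. `i < j` and `j ≤ 2i - d⁻(v_i)`. -/
noncomputable def jacoInDeg (j : ℕ) : ℕ :=
  Nat.strongRecOn j fun j ih =>
    ((Finset.range j).attach.filter
      (fun i => j ≤ 2 * i.1 - ih i.1 (Finset.mem_range.mp i.2))).card

/-- Out-degree of vertex `i` in `J_∞(1)`: the number of `j` with `i < j ≤ 2i - d⁻(v_i)`. -/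
noncomputable def jacoOutDeg (i : ℕ) : ℕ := (Finset.Ioc i (2 * i - jacoInDeg i)).card

/-- The underlying (undirected, simple) graph of the infinite Jaco graph `J_∞(1)` on `ℕ`,
with vertex `i` playing the role of `v_i`. -/
def JacoInf : SimpleGraph ℕ where
  Adj i j := (i < j ∧ j ≤ 2 * i - jacoInDeg i) ∨ (j < i ∧ i ≤ 2 * j - jacoInDeg j)
  symm := ⟨fun i j h => Or.symm h⟩
  loopless := ⟨fun i h => by rcases h with ⟨h, -⟩ | ⟨h, -⟩ <;> omega⟩

/-- The underlying graph of the finite Jaco graph `J_n(1)`: the subgraph of `J_∞(1)`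
induced by `{v_1, …, v_n}`, with `(k : Fin n)` representing `v_{k+1}`. -/
def Jaco (n : ℕ) : SimpleGraph (Fin n) := JacoInf.comap (fun k => (k : ℕ) + 1)

/-- `s` is an independent set of `G`. -/
def IsIndepSet {V : Type*} (G : SimpleGraph V) (s : Set V) : Prop :=
  s.Pairwise fun a b => ¬ G.Adj a b

/-- The independence number of `G`. -/
noncomputable def indepNum {V : Type*} [Fintype V] (G : SimpleGraph V) : ℕ :=
  sSup {k | ∃ s : Set V, _root_.IsIndepSet G s ∧ s.ncard = k}

/-- `s` is a vertex cover of `G`: it meets every edge. -/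
def IsVertexCover {V : Type*} (G : SimpleGraph V) (s : Set V) : Prop :=
  ∀ ⦃a b : V⦄, G.Adj a b → a ∈ s ∨ b ∈ s

/-- The vertex covering number of `G`. -/
noncomputable def coverNum {V : Type*} [Fintype V] (G : SimpleGraph V) : ℕ :=
  sInf {k | ∃ s : Set V, _root_.IsVertexCover G s ∧ s.ncard = k}

/-- `s` is a dominating set of `G`. -/
def IsDomSet {V : Type*} (G : SimpleGraph V) (s : Set V) : Prop :=
  ∀ v ∉ s, ∃ u ∈ s, G.Adj u v

/-- The domination number `γ(G)`. -/
noncomputable def domNum {V : Type*} [Fintype V] (G : SimpleGraph V) : ℕ :=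
  sInf {k | ∃ s : Set V, IsDomSet G s ∧ s.ncard = k}

/-- The murtage number `m(G)`: the minimum number of edges whose addition to `G`
strictly decreases the domination number (and `0` when `γ(G) = 1`). -/
noncomputable def murtage {V : Type*} [Fintype V] (G : SimpleGraph V) : ℕ :=
  if domNum G = 1 then 0
  else sInf {k | ∃ H : SimpleGraph V, G ≤ H ∧ domNum H < domNum G ∧
        (H.edgeSet \ G.edgeSet).ncard = k}

/-- `γ⁻(G)`: the minimum number of vertices whose removal strictly decreases
the domination number. -/
noncomputable def gammaMinus {V : Type*} [Fintype V] (G : SimpleGraph V) : ℕ :=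
  sInf {k | ∃ s : Set V, s.ncard = k ∧
        @domNum _ (Set.toFinite sᶜ).fintype (G.induce sᶜ) < domNum G}

/-- The bondage number `b(G)`: the minimum number of edges whose removal strictly
increases the domination number. -/
noncomputable def bondage {V : Type*} [Fintype V] (G : SimpleGraph V) : ℕ :=
  sInf {k | ∃ H : SimpleGraph V, H ≤ G ∧ domNum G < domNum H ∧
        (G.edgeSet \ H.edgeSet).ncard = k}

/-- The maximum degree `Δ(G)`. -/
noncomputable def maxDeg {V : Type*} [Fintype V] (G : SimpleGraph V) : ℕ :=
  Finset.univ.sup fun v => (G.neighborSet v).ncard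

/-!
For `n ≤ 13` the graph `J_n(1)` is determined by the in-degrees `d⁻(v_1), …, d⁻(v_13)`, which
are computed once from the defining recursion; after that every claim about `J_n(1)` is a
finite check. To get `m(G) = 1` it suffices that `γ(G) ≠ 1` and that some single new edge lowers
`γ`; the exact value of `γ(G)` is never needed. In `J_4(1)` and `J_5(1)` no vertex dominates,
but `v_2` does after adding `v_2v_4`, and `v_3` after adding `v_1v_3`. In `J_12(1)` and `J_13(1)`
no two vertices dominate, but `{v_3, v_8}` does after adding `v_1v_8`.
-/

variable {V : Type*}

lemma IsDomSet.mono {G : SimpleGraph V} {s t : Set V} (hs : IsDomSet G s) (hst : s ⊆ t) :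
    IsDomSet G t := fun v hv ↦
  let ⟨u, hu, huv⟩ := hs v (fun h ↦ hv (hst h))
  ⟨u, hst hu, huv⟩

lemma isDomSet_univ (G : SimpleGraph V) : IsDomSet G Set.univ := fun _ hv ↦ absurd trivial hv

instance [Fintype V] [DecidableEq V] (G : SimpleGraph V) [DecidableRel G.Adj] (s : Finset V) :
    Decidable (IsDomSet G s) :=
  inferInstanceAs (Decidable (∀ v ∉ s, ∃ u ∈ s, G.Adj u v))

lemma isDomSet_sup_edge {G : SimpleGraph V} {s : Set V} {x y : V} (hx : x ∈ s)
    (hs : ∀ v ∉ s, v ≠ y → ∃ u ∈ s, G.Adj u v) : IsDomSet (G ⊔ edge x y) s := by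
  intro v hv
  by_cases hvy : v = y
  · subst hvy
    exact ⟨x, hx, Or.inr ((edge_adj ..).2 ⟨Or.inl ⟨rfl, rfl⟩, ne_of_mem_of_not_mem hx hv⟩)⟩
  · obtain ⟨u, hu, huv⟩ := hs v hv hvy
    exact ⟨u, hu, Or.inl huv⟩

lemma Set.exists_subset_pair_of_ncard_le_two [Nonempty V] {s : Set V} (hs : s.Finite)
    (h : s.ncard ≤ 2) : ∃ a b : V, s ⊆ {a, b} := by
  rcases s.eq_empty_or_nonempty with rfl | ⟨a, ha⟩
  · exact ⟨Classical.arbitrary V, Classical.arbitrary V, Set.empty_subset _⟩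
  obtain ⟨b, hb⟩ := (Set.ncard_le_one_iff_subset_singleton hs.sdiff).1
    (by rw [Set.ncard_sdiff_singleton_of_mem ha]; omega)
  exact ⟨a, b, Set.sdiff_singleton_subset_iff.1 hb⟩

lemma edgeSet_sup_edge_sdiff {G : SimpleGraph V} {x y : V} (hne : x ≠ y) (hxy : ¬ G.Adj x y) :
    (G ⊔ edge x y).edgeSet \ G.edgeSet = {s(x, y)} := by
  rw [edgeSet_sup, edgeSet_edge_of_ne hne, Set.union_sdiff_left, sdiff_eq_left]
  exact Set.disjoint_singleton_left.2 hxy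

section DomNum

variable [Fintype V] {G : SimpleGraph V}

lemma IsDomSet.domNum_le {s : Set V} (hs : IsDomSet G s) : domNum G ≤ s.ncard :=
  Nat.sInf_le ⟨s, hs, rfl⟩

lemma exists_isDomSet_ncard_eq_domNum (G : SimpleGraph V) :
    ∃ s : Set V, IsDomSet G s ∧ s.ncard = domNum G :=
  Nat.sInf_mem
    (⟨_, Set.univ, isDomSet_univ G, rfl⟩ : ∃ k, ∃ s : Set V, IsDomSet G s ∧ s.ncard = k)

lemma one_lt_domNum [Nonempty V] (h : ∀ a : V, ¬ IsDomSet G ↑({a} : Finset V)) :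
    1 < domNum G := by
  obtain ⟨s, hs, hcard⟩ := exists_isDomSet_ncard_eq_domNum G
  by_contra! hle
  obtain ⟨a, ha⟩ := (Set.ncard_le_one_iff_subset_singleton s.toFinite).1 (hcard ▸ hle)
  exact h a (by simpa using hs.mono ha)

lemma two_lt_domNum [Nonempty V] [DecidableEq V]
    (h : ∀ a b : V, ¬ IsDomSet G ↑({a, b} : Finset V)) : 2 < domNum G := by
  obtain ⟨s, hs, hcard⟩ := exists_isDomSet_ncard_eq_domNum G
  by_contra! hle
  obtain ⟨a, b, hab⟩ := Set.exists_subset_pair_of_ncard_le_two s.toFinite (hcard ▸ hle)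
  exact h a b (by simpa using hs.mono hab)

theorem murtage_eq_one_of_domNum_sup_edge_lt {x y : V} (hG : domNum G ≠ 1)
    (hlt : domNum (G ⊔ edge x y) < domNum G) : murtage G = 1 := by
  have hne : x ≠ y := by
    rintro rfl
    simp at hlt
  have hxy : ¬ G.Adj x y := fun h ↦ by simp [sup_edge_of_adj G h] at hlt
  have hone : 1 ∈ {k | ∃ H : SimpleGraph V, G ≤ H ∧ domNum H < domNum G ∧
      (H.edgeSet \ G.edgeSet).ncard = k} :=
    ⟨G ⊔ edge x y, le_sup_left, hlt, by rw [edgeSet_sup_edge_sdiff hne hxy, Set.ncard_singleton]⟩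
  rw [murtage, if_neg hG]
  refine le_antisymm (Nat.sInf_le hone) (Nat.one_le_iff_ne_zero.2 fun h0 ↦ ?_)
  obtain ⟨H, hGH, hH, hcard⟩ :=
    (Nat.sInf_eq_zero.1 h0).resolve_right (Set.nonempty_of_mem hone).ne_empty
  have hHG : H ≤ G := by
    rwa [Set.ncard_eq_zero, Set.sdiff_eq_empty, edgeSet_subset_edgeSet] at hcard
  exact (le_antisymm hHG hGH ▸ hH).false

theorem murtage_eq_one_of_isDomSet_sup_edge [DecidableEq V] {s : Finset V} {x y : V}
    (hx : x ∈ s) (hs : ∀ v ∉ s, v ≠ y → ∃ u ∈ s, G.Adj u v) (hcard : s.card < domNum G) :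
    murtage G = 1 := by
  have hdom : domNum (G ⊔ edge x y) ≤ s.card := by
    simpa using (isDomSet_sup_edge (G := G) (s := ↑s) hx hs).domNum_le
  have hG : 1 < domNum G := lt_of_le_of_lt (Finset.card_pos.2 ⟨x, hx⟩) hcard
  exact murtage_eq_one_of_domNum_sup_edge_lt hG.ne' (hdom.trans_lt hcard)

end DomNum

lemma jacoInDeg_eq_card_filter (j : ℕ) :
    jacoInDeg j = ((Finset.range j).filter fun i ↦ j ≤ 2 * i - jacoInDeg i).card := by
  rw [jacoInDeg, Nat.strongRecOn_eq]
  exact (congrArg Finset.card (Finset.filter_attach (fun i ↦ j ≤ 2 * i - jacoInDeg i) _)).trans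
    ((Finset.card_map _).trans Finset.card_attach)

/-- `JacoInf` with the in-degree function replaced by an arbitrary `d`, so that a computable table
of in-degrees can be substituted for `jacoInDeg`. -/
def jacoGraphOf (d : ℕ → ℕ) : SimpleGraph ℕ where
  Adj i j := (i < j ∧ j ≤ 2 * i - d i) ∨ (j < i ∧ i ≤ 2 * j - d j)
  symm := ⟨fun _ _ h ↦ Or.symm h⟩
  loopless := ⟨fun _ h ↦ by rcases h with ⟨h, -⟩ | ⟨h, -⟩ <;> omega⟩

instance (d : ℕ → ℕ) : DecidableRel (jacoGraphOf d).Adj := fun _ _ ↦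
  inferInstanceAs (Decidable (_ ∨ _))

lemma jaco_eq_comap_jacoGraphOf {n : ℕ} {d : ℕ → ℕ} (hd : ∀ i ≤ n, jacoInDeg i = d i) :
    Jaco n = (jacoGraphOf d).comap fun k : Fin n ↦ (k : ℕ) + 1 := by
  ext k l
  change ((k : ℕ) + 1 < l + 1 ∧ (l : ℕ) + 1 ≤ 2 * (k + 1) - jacoInDeg (k + 1)) ∨
      ((l : ℕ) + 1 < k + 1 ∧ (k : ℕ) + 1 ≤ 2 * (l + 1) - jacoInDeg (l + 1)) ↔ _
  rw [hd _ k.isLt, hd _ l.isLt]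
  rfl

def jacoInDegTable (j : ℕ) : ℕ := [0, 0, 1, 1, 1, 2, 2, 3, 3, 3, 4, 4, 4, 5].getD j 0

lemma jacoInDeg_eq_table : ∀ j ≤ 13, jacoInDeg j = jacoInDegTable j := by
  intro j
  induction j using Nat.strong_induction_on with
  | _ j ih =>
    intro hj
    rw [jacoInDeg_eq_card_filter, Finset.filter_congr fun i hi ↦ by
      rw [ih i (Finset.mem_range.1 hi) (by have := Finset.mem_range.1 hi; omega)]]
    interval_cases j <;> decide

/-- For `n ∈ {4, 5, 12, 13}`, `m(J_n(1)) = 1`. -/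
theorem jaco_murtage_eq_one (n : ℕ) (hn : n = 4 ∨ n = 5 ∨ n = 12 ∨ n = 13) :
    murtage (Jaco n) = 1 := by
  rcases hn with rfl | rfl | rfl | rfl <;>
    rw [jaco_eq_comap_jacoGraphOf fun i hi ↦ jacoInDeg_eq_table i (by omega)]
  · exact murtage_eq_one_of_isDomSet_sup_edge (s := {1}) (x := 1) (y := 3) (by decide) (by decide)
      (one_lt_domNum (by decide))
  · exact murtage_eq_one_of_isDomSet_sup_edge (s := {2}) (x := 2) (y := 0) (by decide) (by decide)
      (one_lt_domNum (by decide))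
  · exact murtage_eq_one_of_isDomSet_sup_edge (s := {2, 7}) (x := 7) (y := 0) (by decide)
      (by decide) (two_lt_domNum (by decide))
  · exact murtage_eq_one_of_isDomSet_sup_edge (s := {2, 7}) (x := 7) (y := 0) (by decide)
      (by decide) (two_lt_domNum (by decide))
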